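/- Fix a vertex v of a connected finite undirected graph Y. Every κ-equivalence class of acyclic orientations of Y contains exactly one acyclic orientation having v as its unique source; i.e., there is a bijection between Acyc_v(Y) and Acyc(Y)/∼_κ. -/

import Mathlib

/-!
Existence: the set `A` of vertices not reachable from `v` has no edge entering it from outside, so
clicking the vertices of `A`, each time a minimal remaining one, reverses exactly the edges between
`A` and its complement. By connectivity some such edge now leaves the reachable set, so it grows;
once every vertex is reachable from `v`, `v` is the unique source.

Uniqueness (Pretzel's invariant): write `σ(i, j) = ±1` according to the direction of the edge `ij`.
A click at `u` changes `σ` by the coboundary of `-2·[u]`, so κ-equivalent orientations satisfy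
`σ - σ' = dδ` for some potential `δ`. If both have `v` as unique source, every vertex is reachable
from `v` in both; `δ` increases along the edges of the first and decreases along those of the
second, so it is constant and `σ = σ'`.
-/

structure Orient {n : ℕ} (Y : SimpleGraph (Fin n)) where
  dir : Fin n → Fin n → Prop
  dir_adj : ∀ i j, dir i j → Y.Adj i j
  dir_iff : ∀ i j, Y.Adj i j → (dir i j ↔ ¬ dir j i)

def IsAcyc {n : ℕ} {Y : SimpleGraph (Fin n)} (o : Orient Y) : Prop :=
  ∀ v, ¬ Relation.TransGen o.dir v v

def IsSource {n : ℕ} {Y : SimpleGraph (Fin n)} (o : Orient Y) (v : Fin n) : Prop :=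
  ∀ j, ¬ o.dir j v

def ClickRel {n : ℕ} {Y : SimpleGraph (Fin n)} (o o' : Orient Y) : Prop :=
  ∃ v, IsSource o v ∧
    ∀ i j, o'.dir i j ↔ (if i = v ∨ j = v then o.dir j i else o.dir i j)

theorem le_of_reflTransGen {α β : Type*} [Preorder β] {r : α → α → Prop} {f : α → β}
    (hf : ∀ a b, r a b → f a ≤ f b) {a b : α} (h : Relation.ReflTransGen r a b) : f a ≤ f b := by
  induction h with
  | refl => exact le_rfl
  | tail _ hbc ih => exact ih.trans (hf _ _ hbc)

namespace Orient

variable {n : ℕ} {Y : SimpleGraph (Fin n)}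

theorem ext {o o' : Orient Y} (h : ∀ i j, o.dir i j ↔ o'.dir i j) : o = o' := by
  cases o; cases o'
  congr
  exact funext₂ fun i j => propext (h i j)

theorem dir_of_not_dir {o : Orient Y} {i j : Fin n} (h : Y.Adj i j) (h' : ¬ o.dir j i) :
    o.dir i j :=
  (o.dir_iff i j h).mpr h'

def click (o : Orient Y) (u : Fin n) : Orient Y where
  dir i j := if i = u ∨ j = u then o.dir j i else o.dir i j
  dir_adj i j h := by
    split at h
    · exact (o.dir_adj j i h).symm
    · exact o.dir_adj i j h
  dir_iff i j hij := by
    by_cases hc : i = u ∨ j = u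
    · simpa only [if_pos hc, if_pos hc.symm] using o.dir_iff j i hij.symm
    · have hc' : ¬ (j = u ∨ i = u) := fun h => hc h.symm
      simpa only [if_neg hc, if_neg hc'] using o.dir_iff i j hij

theorem click_dir (o : Orient Y) (u i j : Fin n) :
    (o.click u).dir i j ↔ if i = u ∨ j = u then o.dir j i else o.dir i j :=
  Iff.rfl

theorem clickRel_click {o : Orient Y} {u : Fin n} (hu : IsSource o u) : ClickRel o (o.click u) :=
  ⟨u, hu, fun _ _ => Iff.rfl⟩

end Orient

open Orient

section

variable {n : ℕ} {Y : SimpleGraph (Fin n)}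

theorem IsAcyc.click {o : Orient Y} (ho : IsAcyc o) {u : Fin n} (hu : IsSource o u) :
    IsAcyc (o.click u) := by
  have sink : ∀ j, ¬ (o.click u).dir u j := fun j hj => hu j (by simpa [click_dir] using hj)
  -- a path of `o.click u` ending away from `u` never passes through the sink `u`
  have lift : ∀ a b, Relation.TransGen (o.click u).dir a b → b ≠ u →
      Relation.TransGen o.dir a b := by
    intro a b h
    induction h with
    | @single b hab =>
      intro hb
      obtain rfl | ha := eq_or_ne a u
      · exact absurd hab (sink b)
      · exact .single (by simpa [click_dir, ha, hb] using hab)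
    | @tail b c _ hbc ih =>
      intro hc
      obtain rfl | hb := eq_or_ne b u
      · exact absurd hbc (sink c)
      · exact (ih hb).tail (by simpa [click_dir, hb, hc] using hbc)
  intro a ha
  obtain rfl | hne := eq_or_ne a u
  · obtain ⟨c, hc, -⟩ := Relation.TransGen.head'_iff.mp ha
    exact sink c hc
  · exact ho a (lift a a ha hne)

theorem IsAcyc.exists_minimal {o : Orient Y} (ho : IsAcyc o) {S : Set (Fin n)}
    (hS : S.Nonempty) : ∃ x ∈ S, ∀ j ∈ S, ¬ o.dir j x := by
  have : IsTrans (Fin n) (Relation.TransGen o.dir) := ⟨fun _ _ _ => .trans⟩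
  have : Std.Irrefl (Relation.TransGen o.dir) := ⟨ho⟩
  obtain ⟨x, hx, hmin⟩ :=
    (Finite.wellFounded_of_trans_of_irrefl (Relation.TransGen o.dir)).has_min S hS
  exact ⟨x, hx, fun j hj hjx => hmin j hj (.single hjx)⟩

theorem IsAcyc.reflTransGen_of_unique_source {o : Orient Y} (ho : IsAcyc o) {v : Fin n}
    (hv : ∀ w, IsSource o w → w = v) (x : Fin n) : Relation.ReflTransGen o.dir v x := by
  by_contra hx
  obtain ⟨y, hy, hmin⟩ := ho.exists_minimal (S := {y | ¬ Relation.ReflTransGen o.dir v y}) ⟨x, hx⟩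
  have hyv : y ≠ v := fun h => hy (h ▸ .refl)
  obtain ⟨j, hjy⟩ : ∃ j, o.dir j y := by
    by_contra! h
    exact hyv (hv y h)
  exact hmin j (fun hj => hy (hj.tail hjy)) hjy

theorem IsAcyc.isSource_of_reachable {o : Orient Y} (ho : IsAcyc o) {v : Fin n}
    (hreach : ∀ x, Relation.ReflTransGen o.dir v x) : IsSource o v :=
  fun j hj => ho v (.tail' (hreach j) hj)

theorem eq_of_isSource_of_reachable {o : Orient Y} {v : Fin n}
    (hreach : ∀ x, Relation.ReflTransGen o.dir v x) {w : Fin n} (hw : IsSource o w) : w = v := by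
  obtain h | ⟨c, -, hc⟩ := (hreach w).cases_tail
  · exact h
  · exact absurd hc (hw c)

abbrev AcycOrient (Y : SimpleGraph (Fin n)) : Type := {o : Orient Y // IsAcyc o}

abbrev KappaEquiv : AcycOrient Y → AcycOrient Y → Prop :=
  Relation.EqvGen fun a b => ClickRel a.1 b.1

open scoped Classical in
theorem exists_kappaEquiv_reverse_across (o : AcycOrient Y) (A : Set (Fin n))
    (hA : ∀ i j, o.1.dir i j → j ∈ A → i ∈ A) :
    ∃ p, KappaEquiv o p ∧
      ∀ i j, p.1.dir i j ↔ if (i ∈ A ↔ j ∈ A) then o.1.dir i j else o.1.dir j i := by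
  induction A using WellFoundedLT.induction generalizing o with
  | ind A ih =>
  obtain rfl | hne := A.eq_empty_or_nonempty
  · exact ⟨o, .refl _, by simp⟩
  obtain ⟨x, hxA, hxmin⟩ := o.2.exists_minimal hne
  have hx : IsSource o.1 x := fun j hj => hxmin j (hA j x hj hxA) hj
  have hA' : ∀ i j, (o.1.click x).dir i j → j ∈ A \ {x} → i ∈ A \ {x} := by
    rintro i j hij ⟨hjA, hjx : j ≠ x⟩
    by_cases hix : i = x
    · subst hix
      exact absurd (by simpa [click_dir] using hij) (hxmin j hjA)
    · simp only [click_dir, hix, hjx, or_self, if_false] at hij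
      exact ⟨hA i j hij hjA, hix⟩
  obtain ⟨p, hp, hpdir⟩ :=
    ih (A \ {x}) (Set.sdiff_singleton_ssubset.mpr hxA) ⟨o.1.click x, o.2.click hx⟩ hA'
  refine ⟨p, .trans _ _ _ (.rel _ _ (clickRel_click hx)) hp, fun i j => ?_⟩
  rw [hpdir]
  by_cases hix : i = x <;> by_cases hjx : j = x <;>
    by_cases hiA : i ∈ A <;> by_cases hjA : j ∈ A <;>
    simp [click_dir, hix, hjx, hiA, hjA, hxA]

theorem exists_kappaEquiv_unreached_ssubset (hY : Y.Connected) {v a : Fin n} (o : AcycOrient Y)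
    (ha : ¬ Relation.ReflTransGen o.1.dir v a) :
    ∃ p, KappaEquiv o p ∧
      {x | ¬ Relation.ReflTransGen p.1.dir v x} ⊂ {x | ¬ Relation.ReflTransGen o.1.dir v x} := by
  obtain ⟨p, hop, hp⟩ :=
    exists_kappaEquiv_reverse_across o {x | ¬ Relation.ReflTransGen o.1.dir v x}
      fun i j hij hj hi => hj (hi.tail hij)
  have keep : ∀ x, Relation.ReflTransGen o.1.dir v x → Relation.ReflTransGen p.1.dir v x := by
    intro x hx
    induction hx with
    | refl => exact .refl
    | @tail b c hb hbc ih => exact ih.tail ((hp b c).mpr (by simp [hb, hb.tail hbc, hbc]))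
  obtain ⟨⟨⟨u, w⟩, huw⟩, -, (hu : Relation.ReflTransGen o.1.dir v u),
      (hw : ¬ Relation.ReflTransGen o.1.dir v w)⟩ :=
    (hY.preconnected v a).some.exists_boundary_dart {x | Relation.ReflTransGen o.1.dir v x} .refl ha
  have hwu : o.1.dir w u := dir_of_not_dir huw.symm fun h => hw (hu.tail h)
  have hreach : Relation.ReflTransGen p.1.dir v w :=
    (keep u hu).tail ((hp u w).mpr (by simp [hu, hw, hwu]))
  refine ⟨p, hop, (Set.ssubset_iff_of_subset fun x (hx : ¬ _) h => hx (keep x h)).mpr ⟨w, hw, ?_⟩⟩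
  exact fun h => h hreach

theorem exists_kappaEquiv_reachable (hY : Y.Connected) (v : Fin n) (o : AcycOrient Y) :
    ∃ p, KappaEquiv o p ∧ ∀ x, Relation.ReflTransGen p.1.dir v x := by
  induction hA : {x | ¬ Relation.ReflTransGen o.1.dir v x} using WellFoundedLT.induction
    generalizing o with
  | ind A ih =>
  by_cases hall : ∀ x, Relation.ReflTransGen o.1.dir v x
  · exact ⟨o, .refl _, hall⟩
  push Not at hall
  obtain ⟨a, ha⟩ := hall
  obtain ⟨p, hop, hsub⟩ := exists_kappaEquiv_unreached_ssubset hY o ha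
  obtain ⟨q, hpq, hq⟩ := ih _ (hA ▸ hsub) p rfl
  exact ⟨q, .trans _ _ _ hop hpq, hq⟩

namespace Orient

open scoped Classical in
noncomputable def sign (o : Orient Y) (i j : Fin n) : ℤ := if o.dir i j then 1 else -1

theorem sign_of_dir {o : Orient Y} {i j : Fin n} (h : o.dir i j) : o.sign i j = 1 := by
  simp [sign, h]

theorem sign_of_not_dir {o : Orient Y} {i j : Fin n} (h : ¬ o.dir i j) : o.sign i j = -1 := by
  simp [sign, h]

theorem sign_le_one (o : Orient Y) (i j : Fin n) : o.sign i j ≤ 1 := by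
  unfold sign; split_ifs <;> norm_num

theorem dir_iff_of_sign_eq {o o' : Orient Y} {i j : Fin n} (h : o.sign i j = o'.sign i j) :
    o.dir i j ↔ o'.dir i j := by
  unfold sign at h
  split_ifs at h <;> simp_all

def Cohomologous (o o' : Orient Y) : Prop :=
  ∃ δ : Fin n → ℤ, ∀ i j, Y.Adj i j → δ j - δ i = o.sign i j - o'.sign i j

theorem cohomologous_equivalence : Equivalence (Cohomologous (Y := Y)) where
  refl _ := ⟨0, fun _ _ _ => by simp⟩
  symm := fun ⟨δ, hδ⟩ => ⟨-δ, fun i j hij => by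
    simp only [Pi.neg_apply]
    linarith [hδ i j hij]⟩
  trans := fun ⟨δ, hδ⟩ ⟨δ', hδ'⟩ => ⟨δ + δ', fun i j hij => by
    simp only [Pi.add_apply]
    linarith [hδ i j hij, hδ' i j hij]⟩

theorem cohomologous_of_clickRel {o o' : Orient Y} (h : ClickRel o o') : Cohomologous o o' := by
  obtain ⟨u, hu, ho'⟩ := h
  refine ⟨fun w => if w = u then -2 else 0, fun i j hij => ?_⟩
  by_cases hiu : i = u
  · subst hiu
    have hj : j ≠ i := hij.ne.symm
    rw [sign_of_dir (dir_of_not_dir hij (hu j)), sign_of_not_dir (by simpa [ho'] using hu j)]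
    simp [hj]
  by_cases hju : j = u
  · subst hju
    rw [sign_of_not_dir (hu i), sign_of_dir (by simpa [ho'] using dir_of_not_dir hij.symm (hu i))]
    simp [hiu]
  · have hdir : o'.dir i j ↔ o.dir i j := by simp [ho', hiu, hju]
    by_cases hd : o.dir i j
    · simp [sign_of_dir hd, sign_of_dir (hdir.mpr hd), hiu, hju]
    · simp [sign_of_not_dir hd, sign_of_not_dir (mt hdir.mp hd), hiu, hju]

theorem Cohomologous.eq_of_reachable {o o' : Orient Y} {v : Fin n} (h : Cohomologous o o')
    (hreach : ∀ x, Relation.ReflTransGen o.dir v x)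
    (hreach' : ∀ x, Relation.ReflTransGen o'.dir v x) : o = o' := by
  obtain ⟨δ, hδ⟩ := h
  have hmono : ∀ i j, o.dir i j → δ i ≤ δ j := fun i j hij => by
    have := hδ i j (o.dir_adj i j hij)
    linarith [sign_of_dir hij, o'.sign_le_one i j]
  have hanti : ∀ i j, o'.dir i j → -δ i ≤ -δ j := fun i j hij => by
    have := hδ i j (o'.dir_adj i j hij)
    linarith [sign_of_dir hij, o.sign_le_one i j]
  have hconst : ∀ x, δ x = δ v := fun x =>
    le_antisymm (neg_le_neg_iff.mp (le_of_reflTransGen hanti (hreach' x)))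
      (le_of_reflTransGen hmono (hreach x))
  refine ext fun i j => ?_
  by_cases hij : Y.Adj i j
  · exact dir_iff_of_sign_eq (by linarith [hδ i j hij, hconst i, hconst j])
  · exact ⟨fun h => absurd (o.dir_adj i j h) hij, fun h => absurd (o'.dir_adj i j h) hij⟩

end Orient

theorem KappaEquiv.cohomologous {a b : AcycOrient Y} (h : KappaEquiv a b) :
    Cohomologous a.1 b.1 :=
  (InvImage.equivalence _ _ cohomologous_equivalence).eqvGen_iff.mp
    (Relation.EqvGen.mono (fun _ _ => cohomologous_of_clickRel) _ _ h)

end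

/-- For a connected graph `Y` and fixed vertex `v`, every κ-equivalence class of
acyclic orientations contains exactly one orientation whose unique source is `v`;
i.e. `Acyc_v(Y)` is a transversal of `Acyc(Y)/∼_κ`. -/
theorem stmt7 {n : ℕ} (Y : SimpleGraph (Fin n)) (hY : Y.Connected) (v : Fin n)
    (o : {o : Orient Y // IsAcyc o}) :
    ∃! o' : {o : Orient Y // IsAcyc o},
      Relation.EqvGen (fun a b : {o : Orient Y // IsAcyc o} => ClickRel a.1 b.1) o o' ∧
      IsSource o'.1 v ∧ ∀ w, IsSource o'.1 w → w = v := by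
  obtain ⟨p, hop, hreach⟩ := exists_kappaEquiv_reachable hY v o
  refine ⟨p, ⟨hop, p.2.isSource_of_reachable hreach,
    fun w => eq_of_isSource_of_reachable hreach⟩, ?_⟩
  rintro q ⟨hoq, -, hq⟩
  have hqp : KappaEquiv q p := .trans _ _ _ (.symm _ _ hoq) hop
  exact Subtype.ext (hqp.cohomologous.eq_of_reachable (q.2.reflTransGen_of_unique_source hq) hreach)
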